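/- For every one-clock priced timed game G and every configuration s of G, the lower value and the upper value coincide: LVal(s) = UVal(s). In other words, one-clock priced timed games are determined, and the value Val = LVal = UVal exists. -/
import Mathlib


/-!
Common formalization of one-clock priced timed games (PTGs), following
"Simple Priced Timed Games are not That Simple".
-/

namespace PTGPaper

/-- The three kinds of locations: locations of player Min, of player Max, and final locations. -/
inductive Owner : Type
  | min : Owner
  | max : Owner
  | final : Owner
deriving DecidableEq

/-- A transition of a one-clock priced timed game: a source location, a guard
(an interval with endpoints `lo`, `hi`, with openness flags `loOpen`, `hiOpen`),
a reset flag, a discrete price, and a target location. -/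
structure PTrans (L : Type) where
  src : L
  lo : ℝ
  hi : ℝ
  loOpen : Bool
  hiOpen : Bool
  reset : Bool
  price : ℤ
  tgt : L

noncomputable instance {L : Type} : DecidableEq (PTrans L) := Classical.decEq _

/-- Membership of a clock value in the guard of a transition. -/
def PTrans.memGuard {L : Type} (δ : PTrans L) (ν : ℝ) : Prop :=
  (if δ.loOpen then δ.lo < ν else δ.lo ≤ ν) ∧
  (if δ.hiOpen then ν < δ.hi else ν ≤ δ.hi)

/-- A one-clock priced timed game. -/
structure PTG where
  Loc : Type
  locFin : Fintype Loc
  locDec : DecidableEq Loc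
  owner : Loc → Owner
  urgent : Loc → Bool
  M : ℕ
  trans : Finset (PTrans Loc)
  price : Loc → ℤ
  fcost : Loc → ℝ → ℝ

attribute [instance] PTG.locFin PTG.locDec

/-- A configuration: a location together with a clock valuation. -/
abbrev PTG.Config (G : PTG) := G.Loc × ℝ

/-- `G.Move s s' t δ c` holds if from configuration `s`, waiting `t` time units and then
taking transition `δ` is legal, leads to configuration `s'` and costs `c`. -/
def PTG.Move (G : PTG) (s s' : G.Config) (t : ℝ) (δ : PTrans G.Loc) (c : ℝ) : Prop :=
  δ ∈ G.trans ∧ δ.src = s.1 ∧ 0 ≤ t ∧ (G.urgent s.1 = true → t = 0) ∧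
  δ.memGuard (s.2 + t) ∧ s'.1 = δ.tgt ∧
  s'.2 = (if δ.reset then 0 else s.2 + t) ∧
  c = (δ.price : ℝ) + t * (G.price s.1 : ℝ)

/-- A finite play (history): an initial configuration followed by a list of steps,
each step consisting of a delay, the transition taken, and the configuration reached. -/
structure Hist (L : Type) where
  start : L × ℝ
  steps : List (ℝ × PTrans L × (L × ℝ))

namespace Hist

variable {L : Type}

def lastFrom (s : L × ℝ) : List (ℝ × PTrans L × (L × ℝ)) → L × ℝ
  | [] => s
  | (_, _, s') :: rest => lastFrom s' rest

/-- The last configuration of a finite play. -/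
def last (h : Hist L) : L × ℝ := lastFrom h.start h.steps

def costFrom (π : L → ℤ) (s : L × ℝ) : List (ℝ × PTrans L × (L × ℝ)) → ℝ
  | [] => 0
  | (t, δ, s') :: rest => ((δ.price : ℝ) + t * (π s.1 : ℝ)) + costFrom π s' rest

/-- The sum of the prices of the discrete transitions along a finite play. -/
def discSum (h : Hist L) : ℤ := (h.steps.map (fun st => st.2.1.price)).sum

/-- The prefix of a finite play consisting of its first `i` steps. -/
def take (h : Hist L) (i : ℕ) : Hist L := ⟨h.start, h.steps.take i⟩

end Hist

/-- Validity of a sequence of steps, starting from a given configuration. -/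
def PTG.ValidFrom (G : PTG) : G.Config → List (ℝ × PTrans G.Loc × G.Config) → Prop
  | _, [] => True
  | s, (t, δ, s') :: rest => (∃ c, G.Move s s' t δ c) ∧ G.ValidFrom s' rest

/-- A valid finite play of `G`. -/
def PTG.HistValid (G : PTG) (h : Hist G.Loc) : Prop :=
  0 ≤ h.start.2 ∧ h.start.2 ≤ (G.M : ℝ) ∧ G.ValidFrom h.start h.steps

/-- Accumulated cost of the moves of a finite play (without any final cost). -/
def PTG.accCost (G : PTG) (h : Hist G.Loc) : ℝ := Hist.costFrom G.price h.start h.steps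

/-- A (deterministic) strategy, given as a function from finite plays to
a pair (delay, transition). -/
abbrev StratFun (L : Type) := Hist L → ℝ × PTrans L

/-- A finite play is consistent with strategy `σ` of the player owning locations of kind `P`
if at every step taken from a location of that player, the move is the one prescribed
by `σ` on the corresponding prefix. -/
def PTG.Consistent (G : PTG) (P : Owner) (σ : StratFun G.Loc) (h : Hist G.Loc) : Prop :=
  ∀ (i : ℕ) (hi : i < h.steps.length),
    G.owner (h.take i).last.1 = P →
    ((h.steps.get ⟨i, hi⟩).1, (h.steps.get ⟨i, hi⟩).2.1) = σ (h.take i)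

/-- A strategy of the player owning the locations of kind `P` is valid if it proposes
a legal move after every valid finite play ending in a location of that player. -/
def PTG.StratValid (G : PTG) (P : Owner) (σ : StratFun G.Loc) : Prop :=
  ∀ h : Hist G.Loc, G.HistValid h → G.owner h.last.1 = P →
    ∃ s' c, G.Move h.last s' (σ h).1 (σ h).2 c

def PTG.MinValid (G : PTG) (σ : StratFun G.Loc) : Prop := G.StratValid Owner.min σ

def PTG.MaxValid (G : PTG) (τ : StratFun G.Loc) : Prop := G.StratValid Owner.max τ

/-- The configuration reached from `s` by the move `td = (delay, transition)`. -/
def PTG.nextCfg (G : PTG) (s : G.Config) (td : ℝ × PTrans G.Loc) : G.Config :=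
  (td.2.tgt, if td.2.reset then 0 else s.2 + td.1)

/-- The finite play of length (at most) `n` obtained from initial configuration `s₀` when
Min plays `σ` and Max plays `τ` (the play stops growing when a final location is reached). -/
def PTG.histOf (G : PTG) (σ τ : StratFun G.Loc) (s₀ : G.Config) : ℕ → Hist G.Loc
  | 0 => ⟨s₀, []⟩
  | n + 1 =>
    let h := G.histOf σ τ s₀ n
    if G.owner h.last.1 = Owner.final then h
    else
      let td := if G.owner h.last.1 = Owner.min then σ h else τ h
      ⟨h.start, h.steps ++ [(td.1, td.2, G.nextCfg h.last td)]⟩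

open Classical in
/-- The cost of the play from `s₀` determined by the profile `(σ, τ)`: `+∞` if no final
location is ever reached, and otherwise the accumulated cost up to the first visit of a
final location, plus the final cost function of that location evaluated at the current
clock value. -/
noncomputable def PTG.playCost (G : PTG) (σ τ : StratFun G.Loc) (s₀ : G.Config) : EReal :=
  if hx : ∃ n, G.owner ((G.histOf σ τ s₀ n).last.1) = Owner.final then
    (((G.accCost (G.histOf σ τ s₀ (Nat.find hx)) +
        G.fcost ((G.histOf σ τ s₀ (Nat.find hx)).last.1)
          ((G.histOf σ τ s₀ (Nat.find hx)).last.2)) : ℝ) : EReal)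
  else ⊤

/-- `Val^σ(s)`, the value of a Min strategy `σ`. -/
noncomputable def PTG.minValue (G : PTG) (σ : StratFun G.Loc) (s : G.Config) : EReal :=
  ⨆ τ : {τ : StratFun G.Loc // G.MaxValid τ}, G.playCost σ τ.1 s

/-- `Val^τ(s)`, the value of a Max strategy `τ`. -/
noncomputable def PTG.maxValue (G : PTG) (τ : StratFun G.Loc) (s : G.Config) : EReal :=
  ⨅ σ : {σ : StratFun G.Loc // G.MinValid σ}, G.playCost σ.1 τ s

/-- The upper value of the game. -/
noncomputable def PTG.uval (G : PTG) (s : G.Config) : EReal :=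
  ⨅ σ : {σ : StratFun G.Loc // G.MinValid σ}, G.minValue σ.1 s

/-- The lower value of the game. -/
noncomputable def PTG.lval (G : PTG) (s : G.Config) : EReal :=
  ⨆ τ : {τ : StratFun G.Loc // G.MaxValid τ}, G.maxValue τ.1 s

/-- The value of the game (games are determined, so this coincides with the upper value). -/
noncomputable def PTG.val (G : PTG) (s : G.Config) : EReal := G.lval s

/-- The fake value of a Min strategy `σ` at configuration `s`: the supremum of the costs of
the plays consistent with `σ` from `s` that do reach a final location. -/
noncomputable def PTG.fakeVal (G : PTG) (σ : StratFun G.Loc) (s : G.Config) : EReal :=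
  sSup {x : EReal | ∃ h : Hist G.Loc, h.start = s ∧ G.HistValid h ∧
    G.Consistent Owner.min σ h ∧ G.owner h.last.1 = Owner.final ∧
    x = (((G.accCost h + G.fcost h.last.1 h.last.2) : ℝ) : EReal)}

/-- Well-formedness of a PTG: transitions leave non-final locations only, guards are
contained in `[0, M]`, urgent locations are non-final, final cost functions are affine with
rational coefficients, and the game is deadlock-free. -/
def PTG.WF (G : PTG) : Prop :=
  (∀ δ ∈ G.trans, G.owner δ.src ≠ Owner.final) ∧
  (∀ δ ∈ G.trans, 0 ≤ δ.lo ∧ δ.hi ≤ (G.M : ℝ)) ∧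
  (∀ ℓ, G.urgent ℓ = true → G.owner ℓ ≠ Owner.final) ∧
  (∀ ℓ, G.owner ℓ = Owner.final → ∃ a b : ℚ, ∀ ν : ℝ, G.fcost ℓ ν = (a : ℝ) * ν + (b : ℝ)) ∧
  (∀ (ℓ : G.Loc) (ν : ℝ), G.owner ℓ ≠ Owner.final → 0 ≤ ν → ν ≤ (G.M : ℝ) →
    ∃ s' t δ c, G.Move (ℓ, ν) s' t δ c)

/-- All guards have natural-number endpoints. -/
def PTG.NatEndpoints (G : PTG) : Prop :=
  ∀ δ ∈ G.trans, (∃ n : ℕ, δ.lo = (n : ℝ)) ∧ ∃ n : ℕ, δ.hi = (n : ℝ)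

/-- `P_T`: the largest absolute value of a transition price. -/
def PTG.PT (G : PTG) : ℕ := G.trans.sup fun δ => δ.price.natAbs

/-- `P_L`: the largest absolute value of a location price-rate. -/
def PTG.PL (G : PTG) : ℕ := Finset.univ.sup fun ℓ : G.Loc => (G.price ℓ).natAbs

/-- `P_f`: the largest absolute value taken by a final cost function on `[0, r]`. -/
noncomputable def PTG.Pf (G : PTG) (r : ℝ) : ℝ :=
  sSup {x : ℝ | ∃ (ℓ : G.Loc) (ν : ℝ), G.owner ℓ = Owner.final ∧ 0 ≤ ν ∧ ν ≤ r ∧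
    x = |G.fcost ℓ ν|}

/-- The number of locations `|L|`. -/
def PTG.nLoc (G : PTG) : ℕ := Fintype.card G.Loc

/-- The number of final locations `|L_f|`. -/
def PTG.nFin (G : PTG) : ℕ :=
  (Finset.univ.filter fun ℓ : G.Loc => G.owner ℓ = Owner.final).card

/-- A measure of the size of `G` (locations, transitions, and binary encodings of
the numerical constants). -/
def PTG.size (G : PTG) : ℕ :=
  G.nLoc + G.trans.card + Nat.log2 (G.M + 2) + Nat.log2 (G.PT + 2) + Nat.log2 (G.PL + 2) + 2

/-- `G` is an `r`-SPTG: every transition has guard `[0, r]` and performs no reset. -/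
def PTG.IsSPTG (G : PTG) (r : ℝ) : Prop :=
  0 ≤ r ∧ r ≤ 1 ∧ ∀ δ ∈ G.trans,
    δ.lo = 0 ∧ δ.hi = r ∧ δ.loOpen = false ∧ δ.hiOpen = false ∧ δ.reset = false

/-- The left end of the `i`-th interval determined by the points `pt` (with the convention
`ν₀ = min 0 (pt 0)`). -/
def prevPt {k : ℕ} (pt : Fin (k + 1) → ℝ) (i : Fin (k + 1)) : ℝ :=
  if (i : ℕ) = 0 then min 0 (pt 0) else
    pt ⟨(i : ℕ) - 1, lt_of_le_of_lt (Nat.sub_le _ _) i.isLt⟩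

/-- A finite positional (FP) strategy of the player owning locations of kind `P` in an
`r`-SPTG: a memoryless strategy which, on each location of that player, is described by
finitely many rational threshold points `0 ≤ ν₁ < ⋯ < ν_k = r` and transitions
`δ₁, …, δ_k`, and on each induced interval either always plays immediately
or always waits until the right endpoint of the interval. -/
structure FPStrat (G : PTG) (r : ℝ) (P : Owner) where
  strat : StratFun G.Loc
  valid : G.StratValid P strat
  memoryless : ∀ h h' : Hist G.Loc, G.HistValid h → G.HistValid h' →
    h.last = h'.last → strat h = strat h'
  points : Finset ℝ
  points_rat : ∀ p ∈ points, ∃ q : ℚ, p = (q : ℝ)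
  points_mem : ∀ p ∈ points, 0 ≤ p ∧ p ≤ r
  r_mem : r ∈ points
  piecewise : ∀ ℓ : G.Loc, G.owner ℓ = P →
    ∃ (k : ℕ) (pt : Fin (k + 1) → ℝ) (δ : Fin (k + 1) → PTrans G.Loc),
      StrictMono pt ∧ 0 ≤ pt 0 ∧ pt (Fin.last k) = r ∧ (∀ i, pt i ∈ points) ∧
      (∀ i : Fin (k + 1),
        (∀ ν : ℝ, prevPt pt i < ν → ν ≤ pt i → strat ⟨(ℓ, ν), []⟩ = (0, δ i)) ∨
        (∀ ν : ℝ, prevPt pt i < ν → ν ≤ pt i → strat ⟨(ℓ, ν), []⟩ = (pt i - ν, δ i))) ∧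
      (0 < pt 0 → strat ⟨(ℓ, 0), []⟩ = (pt 0, δ 0))

/-- The size `|σ|` of an FP strategy: the number of intervals generated by its points. -/
def FPStrat.size {G : PTG} {r : ℝ} {P : Owner} (σ : FPStrat G r P) : ℕ := σ.points.card

/-- Two clock values lie in the same interval of the partition induced by `pts`
(intervals being half-open to the left). -/
def SameInterval (pts : Finset ℝ) (ν ν' : ℝ) : Prop := ∀ p ∈ pts, (ν ≤ p ↔ ν' ≤ p)

/-- A negative cycle (NC) strategy of Min: an FP strategy such that along every consistent
finite play which starts and ends in the same location, with both clock values in the same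
interval of the strategy, the sum of the prices of the discrete transitions is at most −1. -/
def FPStrat.IsNC {G : PTG} {r : ℝ} (σ : FPStrat G r Owner.min) : Prop :=
  ∀ h : Hist G.Loc, G.HistValid h → G.Consistent Owner.min σ.strat h →
    h.steps ≠ [] → h.last.1 = h.start.1 → SameInterval σ.points h.start.2 h.last.2 →
    h.discSum ≤ -1

/-- A fake-optimal Min strategy: its fake value equals the value of the game everywhere. -/
def FPStrat.FakeOpt {G : PTG} {r : ℝ} (σ : FPStrat G r Owner.min) : Prop :=
  ∀ (ℓ : G.Loc) (ν : ℝ), 0 ≤ ν → ν ≤ r → G.fakeVal σ.strat (ℓ, ν) = G.val (ℓ, ν)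

/-- An optimal Max FP strategy: its value equals the value of the game everywhere. -/
def FPStrat.Opt {G : PTG} {r : ℝ} (τ : FPStrat G r Owner.max) : Prop :=
  ∀ (ℓ : G.Loc) (ν : ℝ), 0 ≤ ν → ν ≤ r → G.maxValue τ.strat (ℓ, ν) = G.val (ℓ, ν)

/-- A cost function on `[0, r]`: either infinite, or continuous piecewise affine with
finitely many cutpoints, all cutpoints and the values at them being rational. -/
def IsCostFunctionOn (r : ℝ) (f : ℝ → EReal) : Prop :=
  (∀ ν : ℝ, 0 ≤ ν → ν ≤ r → f ν = ⊤) ∨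
  (∀ ν : ℝ, 0 ≤ ν → ν ≤ r → f ν = ⊥) ∨
  ∃ (n : ℕ) (a : Fin (n + 1) → ℚ),
    Monotone a ∧ ((a 0 : ℝ) = 0) ∧ ((a (Fin.last n) : ℝ) = r) ∧
    (∀ i, ∃ q : ℚ, f ((a i : ℚ) : ℝ) = ((q : ℝ) : EReal)) ∧
    ∀ i : Fin n, ∃ α β : ℝ, ∀ ν : ℝ, ((a i.castSucc : ℚ) : ℝ) ≤ ν → ν ≤ ((a i.succ : ℚ) : ℝ) →
      f ν = ((α * ν + β : ℝ) : EReal)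

/-- An `r`-SPTG is finitely optimal if Min has a fake-optimal NC strategy, Max has an optimal
FP strategy, and the value function of every location is a cost function. -/
def PTG.FinitelyOptimal (G : PTG) (r : ℝ) : Prop :=
  (∃ σ : FPStrat G r Owner.min, σ.IsNC ∧ σ.FakeOpt) ∧
  (∃ τ : FPStrat G r Owner.max, τ.Opt) ∧
  ∀ ℓ : G.Loc, IsCostFunctionOn r fun ν => G.val (ℓ, ν)

/-- The finite set `F_G` of affine functions `k + φ_ℓ`, for `ℓ` final and
`k ∈ [−(|L|−1)·P_T, |L|·P_T] ∩ ℤ`. -/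
def PTG.FF (G : PTG) : Set (ℝ → ℝ) :=
  {f | ∃ (ℓ : G.Loc) (k : ℤ), G.owner ℓ = Owner.final ∧
    -(((G.nLoc : ℤ) - 1) * (G.PT : ℤ)) ≤ k ∧ k ≤ (G.nLoc : ℤ) * (G.PT : ℤ) ∧
    f = fun ν => (k : ℝ) + G.fcost ℓ ν}

noncomputable def PTG.FFcard (G : PTG) : ℕ := G.FF.ncard

/-- The set of possible cutpoints: intersection points of two distinct functions of `F_G`. -/
def PTG.posscp (G : PTG) (r : ℝ) : Set ℝ :=
  {ν | 0 ≤ ν ∧ ν ≤ r ∧ ∃ f₁ ∈ G.FF, ∃ f₂ ∈ G.FF, f₁ ≠ f₂ ∧ f₁ ν = f₂ ν}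

/-- The construction `Wait(G, r, x)`: all guards are restricted to `[0, r]` and, for every
non-urgent location `ℓ`, a clone final location `ℓ^f` is added, with final cost function
`ν ↦ (r − ν)·π(ℓ) + x_ℓ`, together with a price-0 transition `(ℓ, ℓ^f)`.
(Clone locations are created for all locations; those of urgent or final locations are
unreachable since no transition leads to them.) -/
noncomputable def PTG.wait (G : PTG) (r : ℝ) (x : G.Loc → ℝ) : PTG where
  Loc := G.Loc ⊕ G.Loc
  locFin := inferInstance
  locDec := inferInstance
  owner := Sum.elim G.owner fun _ => Owner.final
  urgent := Sum.elim G.urgent fun _ => false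
  M := G.M
  trans :=
    (G.trans.image fun δ =>
      { src := Sum.inl δ.src, lo := max δ.lo 0, hi := min δ.hi r,
        loOpen := δ.loOpen, hiOpen := δ.hiOpen, reset := δ.reset,
        price := δ.price, tgt := Sum.inl δ.tgt }) ∪
    ((Finset.univ.filter fun ℓ : G.Loc =>
        G.owner ℓ ≠ Owner.final ∧ G.urgent ℓ = false).image
      fun ℓ => { src := Sum.inl ℓ, lo := 0, hi := r, loOpen := false, hiOpen := false,
                 reset := false, price := 0, tgt := Sum.inr ℓ })
  price := Sum.elim G.price fun _ => 0
  fcost := Sum.elim G.fcost fun ℓ ν => (r - ν) * (G.price ℓ : ℝ) + x ℓ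

/-- `G_r = Wait(G, r, (Val_G(ℓ, r))_ℓ)`. -/
noncomputable def PTG.Gr (G : PTG) (r : ℝ) : PTG :=
  G.wait r fun ℓ => (G.val (ℓ, r)).toReal

/-- Making the locations indicated by `S` urgent. -/
def PTG.makeUrgent (G : PTG) (S : G.Loc → Bool) : PTG :=
  { G with urgent := fun ℓ => G.urgent ℓ || S ℓ }

/-- `G_{L', r}`: the game `G_r` in which all locations of `L'` are made urgent. -/
noncomputable def PTG.GLr (G : PTG) (S : G.Loc → Bool) (r : ℝ) : PTG :=
  (G.Gr r).makeUrgent (Sum.elim S fun _ => false)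

/-- The operator `Next_{L'}(r)`: the supremum of the `r' ≤ r` such that the value functions
of `G_{L',r}` and of `G` coincide on `[r', r]`. -/
noncomputable def PTG.Next (G : PTG) (S : G.Loc → Bool) (r : ℝ) : ℝ :=
  sSup {r' : ℝ | 0 ≤ r' ∧ r' ≤ r ∧ ∀ (ℓ : G.Loc) (ν : ℝ), r' ≤ ν → ν ≤ r →
    (G.GLr S r).val (Sum.inl ℓ, ν) = G.val (ℓ, ν)}

/-- Turning additionally location `ℓ` urgent: `L' ∪ {ℓ}` as a Boolean predicate. -/
def addLoc (G : PTG) (S : G.Loc → Bool) (ℓ : G.Loc) : G.Loc → Bool :=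
  fun ℓ' => S ℓ' || decide (ℓ' = ℓ)

/-- The singleton `{ℓ}` as a Boolean predicate. -/
def singLoc (G : PTG) (ℓ : G.Loc) : G.Loc → Bool := fun ℓ' => decide (ℓ' = ℓ)

/-- `f` is, on `[0, r]`, piecewise affine with at most `N` cutpoints. -/
def PWAffineOn (r : ℝ) (f : ℝ → EReal) (N : ℕ) : Prop :=
  ∃ n : ℕ, n ≤ N ∧ ∃ a : Fin (n + 2) → ℝ,
    Monotone a ∧ a 0 = 0 ∧ a (Fin.last (n + 1)) = r ∧
    ∀ i : Fin (n + 1), ∃ α β : ℝ, ∀ ν : ℝ, a i.castSucc ≤ ν → ν ≤ a i.succ →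
      f ν = ((α * ν + β : ℝ) : EReal)

/-- `f` has a cutpoint in `[a, b)`: some point of `[a, b)` has no neighbourhood
(within `[0,1]`) on which `f` is affine. -/
def HasCutpointIn (f : ℝ → EReal) (a b : ℝ) : Prop :=
  ∃ x : ℝ, a ≤ x ∧ x < b ∧ ∀ ε : ℝ, 0 < ε →
    ¬ ∃ α β : ℝ, ∀ ν : ℝ, max 0 (x - ε) ≤ ν → ν ≤ min 1 (x + ε) →
      f ν = ((α * ν + β : ℝ) : EReal)

/-- The endpoints of the guards of `G`, together with `0`. -/
noncomputable def PTG.endpoints (G : PTG) : Finset ℝ :=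
  insert 0 ((G.trans.image PTrans.lo) ∪ (G.trans.image PTrans.hi))

/-- `s` is a region of `G`: a singleton of an endpoint, or an open interval between two
consecutive endpoints. -/
def PTG.IsRegion (G : PTG) (s : Set ℝ) : Prop :=
  (∃ e ∈ G.endpoints, s = {e}) ∨
  ∃ e ∈ G.endpoints, ∃ e' ∈ G.endpoints, e < e' ∧
    (∀ p ∈ G.endpoints, p ≤ e ∨ e' ≤ p) ∧ s = Set.Ioo e e'

/-- No cycle of the configuration graph of `G` traverses a resetting transition. -/
def PTG.ResetAcyclic (G : PTG) : Prop :=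
  ¬ ∃ h : Hist G.Loc, G.HistValid h ∧ h.steps ≠ [] ∧ h.last = h.start ∧
      ∃ st ∈ h.steps, st.2.1.reset = true

/-- An `ε`-optimal strategy of Min. -/
def PTG.MinEpsOpt (G : PTG) (σ : StratFun G.Loc) (ε : ℝ) : Prop :=
  G.MinValid σ ∧ ∀ (ℓ : G.Loc) (ν : ℝ), 0 ≤ ν → ν ≤ (G.M : ℝ) →
    G.minValue σ (ℓ, ν) ≤ G.val (ℓ, ν) + (ε : EReal)

/-- An `ε`-optimal strategy of Max. -/
def PTG.MaxEpsOpt (G : PTG) (τ : StratFun G.Loc) (ε : ℝ) : Prop :=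
  G.MaxValid τ ∧ ∀ (ℓ : G.Loc) (ν : ℝ), 0 ≤ ν → ν ≤ (G.M : ℝ) →
    G.val (ℓ, ν) - (ε : EReal) ≤ G.maxValue τ (ℓ, ν)

end PTGPaper

namespace PTGPaper

open Classical

noncomputable section Determinacy

variable {G : PTG}

/-- Extending a history by one move. -/
def PTG.extendH (G : PTG) (h : Hist G.Loc) (td : ℝ × PTrans G.Loc) : Hist G.Loc :=
  ⟨h.start, h.steps ++ [(td.1, td.2, G.nextCfg h.last td)]⟩

/-- A move is legal at a history (trivially so if the history is invalid). -/
def PTG.Legal (G : PTG) (h : Hist G.Loc) (td : ℝ × PTrans G.Loc) : Prop :=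
  G.HistValid h → ∃ cc, G.Move h.last (G.nextCfg h.last td) td.1 td.2 cc

lemma move_nextCfg {s0 s' : G.Config} {t : ℝ} {δ : PTrans G.Loc} {cc : ℝ}
    (hm : G.Move s0 s' t δ cc) : s' = G.nextCfg s0 (t, δ) := by
  obtain ⟨_, _, _, _, _, h6, h7, _⟩ := hm
  exact Prod.ext h6 h7

lemma clock_bound_aux (hwf : G.WF) :
    ∀ (l : List (ℝ × PTrans G.Loc × G.Config)) (s0 : G.Config), 0 ≤ s0.2 → s0.2 ≤ (G.M : ℝ) →
      G.ValidFrom s0 l → 0 ≤ (Hist.lastFrom s0 l).2 ∧ (Hist.lastFrom s0 l).2 ≤ (G.M : ℝ) := by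
  intro l
  induction l with
  | nil => intro s0 h0 hM _; exact ⟨h0, hM⟩
  | cons x rest ih =>
    rcases x with ⟨t, δ, s'⟩
    intro s0 h0 hM hv
    obtain ⟨⟨cc, hm⟩, hrest⟩ := hv
    obtain ⟨hδ, _, ht, _, hg, _, hs', _⟩ := hm
    have hb : 0 ≤ s'.2 ∧ s'.2 ≤ (G.M : ℝ) := by
      rw [hs']
      split
      · exact ⟨le_refl 0, Nat.cast_nonneg _⟩
      · constructor
        · linarith
        · have h2 := hg.2
          have hhi := (hwf.2.1 δ hδ).2
          split at h2 <;> linarith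
    exact ih s' hb.1 hb.2 hrest

lemma clock_bound (hwf : G.WF) {h : Hist G.Loc} (hv : G.HistValid h) :
    0 ≤ h.last.2 ∧ h.last.2 ≤ (G.M : ℝ) :=
  clock_bound_aux hwf h.steps h.start hv.1 hv.2.1 hv.2.2

lemma exists_legal (hwf : G.WF) (h : Hist G.Loc) (hne : G.owner h.last.1 ≠ Owner.final) :
    ∃ td, G.Legal h td := by
  by_cases hv : G.HistValid h
  · obtain ⟨hb0, hbM⟩ := clock_bound hwf hv
    obtain ⟨s', t, δ, cc, hm⟩ := hwf.2.2.2.2 h.last.1 h.last.2 hne hb0 hbM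
    refine ⟨(t, δ), fun _ => ⟨cc, ?_⟩⟩
    have he : (h.last.1, h.last.2) = h.last := rfl
    rw [he] at hm
    rwa [move_nextCfg hm] at hm
  · exact ⟨(0, ⟨h.last.1, 0, 0, false, false, false, 0, h.last.1⟩),
      fun hv' => absurd hv' hv⟩

/-- A default legal move (when one exists). -/
def PTG.pickLegal (G : PTG) (h : Hist G.Loc) : ℝ × PTrans G.Loc :=
  if hv : ∃ td, G.Legal h td then hv.choose
  else (0, ⟨h.last.1, 0, 0, false, false, false, 0, h.last.1⟩)

lemma pickLegal_legal (hwf : G.WF) (h : Hist G.Loc) (hne : G.owner h.last.1 ≠ Owner.final) :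
    G.Legal h (G.pickLegal h) := by
  unfold PTG.pickLegal
  split
  · next hv => exact hv.choose_spec
  · next hv => exact absurd (exists_legal hwf h hne) hv

/-- A certificate that Min can force reaching a final location with total cost `< c`. -/
inductive Cert (G : PTG) (c : ℝ) : Hist G.Loc → Type where
  | fin : ∀ h, G.owner h.last.1 = Owner.final →
      G.accCost h + G.fcost h.last.1 h.last.2 < c → Cert G c h
  | mn : ∀ h td, G.owner h.last.1 = Owner.min → G.Legal h td →
      Cert G c (G.extendH h td) → Cert G c h
  | mx : ∀ h, G.owner h.last.1 = Owner.max →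
      (∀ td, G.Legal h td → Cert G c (G.extendH h td)) → Cert G c h

/-- Threading a certificate along a list of steps. -/
def thread (G : PTG) (c : ℝ) :
    List (ℝ × PTrans G.Loc × G.Config) → (h : Hist G.Loc) → Cert G c h →
      Option (Σ h' : Hist G.Loc, Cert G c h')
  | [], h, k => some ⟨h, k⟩
  | x :: rest, h, k =>
    match k with
    | .fin _ _ _ => none
    | .mn _ td _ _ k' =>
        if x = (td.1, td.2, G.nextCfg h.last td) then thread G c rest _ k' else none
    | .mx _ _ f =>
        if hx : G.Legal h (x.1, x.2.1) ∧ x.2.2 = G.nextCfg h.last (x.1, x.2.1) then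
          thread G c rest _ (f (x.1, x.2.1) hx.1)
        else none

lemma thread_nil (c : ℝ) (h : Hist G.Loc) (k : Cert G c h) :
    thread G c [] h k = some ⟨h, k⟩ := rfl

lemma thread_cons_mn (c : ℝ) (x : ℝ × PTrans G.Loc × G.Config)
    (rest : List (ℝ × PTrans G.Loc × G.Config)) (h : Hist G.Loc) (td : ℝ × PTrans G.Loc)
    (ho : G.owner h.last.1 = Owner.min) (hl : G.Legal h td) (k' : Cert G c (G.extendH h td)) :
    thread G c (x :: rest) h (.mn h td ho hl k')
      = if x = (td.1, td.2, G.nextCfg h.last td) then thread G c rest _ k' else none := rfl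

lemma thread_cons_mx (c : ℝ) (x : ℝ × PTrans G.Loc × G.Config)
    (rest : List (ℝ × PTrans G.Loc × G.Config)) (h : Hist G.Loc)
    (ho : G.owner h.last.1 = Owner.max)
    (f : ∀ td, G.Legal h td → Cert G c (G.extendH h td)) :
    thread G c (x :: rest) h (.mx h ho f)
      = if hx : G.Legal h (x.1, x.2.1) ∧ x.2.2 = G.nextCfg h.last (x.1, x.2.1) then
          thread G c rest _ (f (x.1, x.2.1) hx.1)
        else none := rfl

lemma thread_cons_fin (c : ℝ) (x : ℝ × PTrans G.Loc × G.Config)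
    (rest : List (ℝ × PTrans G.Loc × G.Config)) (h : Hist G.Loc)
    (hf : G.owner h.last.1 = Owner.final) (hc : G.accCost h + G.fcost h.last.1 h.last.2 < c) :
    thread G c (x :: rest) h (.fin h hf hc) = none := rfl

lemma thread_append (c : ℝ) (l l' : List (ℝ × PTrans G.Loc × G.Config)) :
    ∀ (h : Hist G.Loc) (k : Cert G c h),
      thread G c (l ++ l') h k = (thread G c l h k).bind fun p => thread G c l' p.1 p.2 := by
  induction l with
  | nil => intro h k; rfl
  | cons x rest ih =>
    intro h k
    cases k with
    | fin h hf hc =>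
      rw [show ((x :: rest) ++ l') = x :: (rest ++ l') from rfl, thread_cons_fin,
        thread_cons_fin]
      rfl
    | mn h td ho hl k' =>
      rw [show ((x :: rest) ++ l') = x :: (rest ++ l') from rfl, thread_cons_mn,
        thread_cons_mn]
      split
      · rw [ih]
      · rfl
    | mx h ho f =>
      rw [show ((x :: rest) ++ l') = x :: (rest ++ l') from rfl, thread_cons_mx,
        thread_cons_mx]
      split
      · rw [ih]
      · rfl

lemma thread_spec (c : ℝ) (l : List (ℝ × PTrans G.Loc × G.Config)) :
    ∀ (h : Hist G.Loc) (k : Cert G c h) (h' : Hist G.Loc) (k' : Cert G c h'),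
      thread G c l h k = some ⟨h', k'⟩ → h' = ⟨h.start, h.steps ++ l⟩ := by
  induction l with
  | nil =>
    intro h k h' k' ht
    rw [thread_nil] at ht
    have := congrArg (fun p => (Option.getD (p.map Sigma.fst) h')) ht
    simp at this
    rw [← this]
    simp
  | cons x rest ih =>
    intro h k h' k' ht
    cases k with
    | fin h hf hc => rw [thread_cons_fin] at ht; exact absurd ht (by simp)
    | mn h td ho hl k'' =>
      rw [thread_cons_mn] at ht
      split at ht
      · next hx =>
        have := ih _ k'' h' k' ht
        rw [this]
        simp [PTG.extendH, hx]
      · exact absurd ht (by simp)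
    | mx h ho f =>
      rw [thread_cons_mx] at ht
      split at ht
      · next hx =>
        rcases x with ⟨a, b, d⟩
        have hd : d = G.nextCfg h.last (a, b) := hx.2
        subst hd
        have := ih _ _ h' k' ht
        rw [this]
        simp [PTG.extendH]
      · exact absurd ht (by simp)

lemma histOf_succ_final {σ τ : StratFun G.Loc} {s₀ : G.Config} {n : ℕ}
    (hf : G.owner ((G.histOf σ τ s₀ n).last.1) = Owner.final) :
    G.histOf σ τ s₀ (n + 1) = G.histOf σ τ s₀ n := by
  simp [PTG.histOf, hf]

lemma histOf_succ_min {σ τ : StratFun G.Loc} {s₀ : G.Config} {n : ℕ}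
    (ho : G.owner ((G.histOf σ τ s₀ n).last.1) = Owner.min) :
    G.histOf σ τ s₀ (n + 1) = G.extendH (G.histOf σ τ s₀ n) (σ (G.histOf σ τ s₀ n)) := by
  simp [PTG.histOf, ho, PTG.extendH]

lemma histOf_succ_max {σ τ : StratFun G.Loc} {s₀ : G.Config} {n : ℕ}
    (ho : G.owner ((G.histOf σ τ s₀ n).last.1) = Owner.max) :
    G.histOf σ τ s₀ (n + 1) = G.extendH (G.histOf σ τ s₀ n) (τ (G.histOf σ τ s₀ n)) := by
  simp [PTG.histOf, ho, PTG.extendH]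

lemma histOf_stall {σ τ : StratFun G.Loc} {s₀ : G.Config} {n : ℕ}
    (hf : G.owner ((G.histOf σ τ s₀ n).last.1) = Owner.final) :
    ∀ m, n ≤ m → G.histOf σ τ s₀ m = G.histOf σ τ s₀ n := by
  intro m hm
  induction m, hm using Nat.le_induction with
  | base => rfl
  | succ m hm ih => rw [histOf_succ_final (by rw [ih]; exact hf), ih]

/-- The certificate-following strategy of Min. -/
def minStrat (G : PTG) (c : ℝ) (s : G.Config) (k0 : Cert G c ⟨s, []⟩) : StratFun G.Loc :=
  fun h =>
    if h.start = s then
      match thread G c h.steps ⟨s, []⟩ k0 with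
      | some ⟨_, .mn _ td _ _ _⟩ => td
      | _ => G.pickLegal h
    else G.pickLegal h

lemma minStrat_eq_mn {c : ℝ} {s : G.Config} {k0 : Cert G c ⟨s, []⟩} {h : Hist G.Loc}
    {td : ℝ × PTrans G.Loc} {ho : G.owner h.last.1 = Owner.min} {hl : G.Legal h td}
    {k' : Cert G c (G.extendH h td)} (hstart : h.start = s)
    (ht : thread G c h.steps ⟨s, []⟩ k0 = some ⟨h, .mn h td ho hl k'⟩) :
    minStrat G c s k0 h = td := by
  unfold minStrat
  rw [if_pos hstart, ht]

lemma legal_of_move {h : Hist G.Loc} {td : ℝ × PTrans G.Loc}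
    (hm : ∃ s' cc, G.Move h.last s' td.1 td.2 cc) : G.Legal h td := by
  intro _
  obtain ⟨s', cc, hm⟩ := hm
  have h2 : s' = G.nextCfg h.last (td.1, td.2) := move_nextCfg hm
  rw [h2] at hm
  exact ⟨cc, hm⟩

lemma move_of_legal {h : Hist G.Loc} {td : ℝ × PTrans G.Loc} (hl : G.Legal h td)
    (hv : G.HistValid h) : ∃ s' cc, G.Move h.last s' td.1 td.2 cc := by
  obtain ⟨cc, hm⟩ := hl hv
  exact ⟨_, cc, hm⟩

lemma minStrat_valid (hwf : G.WF) (c : ℝ) (s : G.Config) (k0 : Cert G c ⟨s, []⟩) :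
    G.MinValid (minStrat G c s k0) := by
  intro h hv ho
  have hne : G.owner h.last.1 ≠ Owner.final := by rw [ho]; simp
  by_cases hstart : h.start = s
  · rcases hthread : thread G c h.steps ⟨s, []⟩ k0 with _ | ⟨h', k'⟩
    · have : minStrat G c s k0 h = G.pickLegal h := by
        unfold minStrat; rw [if_pos hstart, hthread]
      rw [this]
      exact move_of_legal (pickLegal_legal hwf h hne) hv
    · have hh : h' = h := by
        have := thread_spec c h.steps ⟨s, []⟩ k0 h' k' hthread
        rw [this, ← hstart]
        rfl
      subst hh
      cases k' with
      | mn h' td ho' hl k'' =>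
        rw [minStrat_eq_mn hstart hthread]
        exact move_of_legal hl hv
      | fin h' hf hc =>
        have : minStrat G c s k0 h' = G.pickLegal h' := by
          unfold minStrat; rw [if_pos hstart, hthread]
        rw [this]
        exact move_of_legal (pickLegal_legal hwf h' hne) hv
      | mx h' ho' f =>
        have : minStrat G c s k0 h' = G.pickLegal h' := by
          unfold minStrat; rw [if_pos hstart, hthread]
        rw [this]
        exact move_of_legal (pickLegal_legal hwf h' hne) hv
  · have : minStrat G c s k0 h = G.pickLegal h := by
      unfold minStrat; rw [if_neg hstart]
    rw [this]
    exact move_of_legal (pickLegal_legal hwf h hne) hv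

lemma min_main (c : ℝ) (s : G.Config) (k0 : Cert G c ⟨s, []⟩)
    (τ : StratFun G.Loc) (hτ : G.MaxValid τ) :
    ∀ (h : Hist G.Loc) (k : Cert G c h), ∀ n : ℕ,
      G.histOf (minStrat G c s k0) τ s n = h →
      thread G c h.steps ⟨s, []⟩ k0 = some ⟨h, k⟩ →
      ∃ m, G.owner ((G.histOf (minStrat G c s k0) τ s m).last.1) = Owner.final ∧
        G.accCost (G.histOf (minStrat G c s k0) τ s m) +
          G.fcost ((G.histOf (minStrat G c s k0) τ s m).last.1)
            ((G.histOf (minStrat G c s k0) τ s m).last.2) < c := by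
  intro h k
  induction k with
  | fin h hf hc =>
    intro n hn _
    exact ⟨n, by rw [hn]; exact hf, by rw [hn]; exact hc⟩
  | mn h td ho hl k' ih =>
    intro n hn ht
    have hstart : h.start = s := by
      have := thread_spec c h.steps ⟨s, []⟩ k0 h _ ht
      exact congrArg Hist.start this
    have hσ : minStrat G c s k0 h = td := minStrat_eq_mn hstart ht
    have hstep : G.histOf (minStrat G c s k0) τ s (n + 1) = G.extendH h td := by
      rw [histOf_succ_min (by rw [hn]; exact ho), hn, hσ]
    have ht' : thread G c (G.extendH h td).steps ⟨s, []⟩ k0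
        = some ⟨G.extendH h td, k'⟩ := by
      show thread G c (h.steps ++ [(td.1, td.2, G.nextCfg h.last td)]) ⟨s, []⟩ k0 = _
      rw [thread_append, ht]
      show thread G c [(td.1, td.2, G.nextCfg h.last td)] h (.mn h td ho hl k') = _
      rw [thread_cons_mn, if_pos rfl, thread_nil]
    exact ih (n + 1) hstep ht'
  | mx h ho f ih =>
    intro n hn ht
    have hl : G.Legal h (τ h) := by
      intro hv
      obtain ⟨s', cc, hm⟩ := hτ h hv ho
      have h2 : s' = G.nextCfg h.last ((τ h).1, (τ h).2) := move_nextCfg hm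
      rw [h2] at hm
      exact ⟨cc, hm⟩
    have hstep : G.histOf (minStrat G c s k0) τ s (n + 1) = G.extendH h (τ h) := by
      rw [histOf_succ_max (by rw [hn]; exact ho), hn]
    have ht' : thread G c (G.extendH h (τ h)).steps ⟨s, []⟩ k0
        = some ⟨G.extendH h (τ h), f (τ h) hl⟩ := by
      show thread G c (h.steps ++ [((τ h).1, (τ h).2, G.nextCfg h.last (τ h))]) ⟨s, []⟩ k0 = _
      rw [thread_append, ht]
      show thread G c [((τ h).1, (τ h).2, G.nextCfg h.last (τ h))] h (.mx h ho f) = _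
      rw [thread_cons_mx]
      rw [dif_pos ⟨hl, rfl⟩]
      rw [thread_nil]
    exact ih (τ h) hl (n + 1) hstep ht'

lemma min_bound (c : ℝ) (s : G.Config) (k0 : Cert G c ⟨s, []⟩)
    (τ : StratFun G.Loc) (hτ : G.MaxValid τ) :
    G.playCost (minStrat G c s k0) τ s ≤ (c : EReal) := by
  obtain ⟨m, hm, hc⟩ := min_main c s k0 τ hτ ⟨s, []⟩ k0 0 rfl (thread_nil c _ k0)
  have hx : ∃ n, G.owner ((G.histOf (minStrat G c s k0) τ s n).last.1) = Owner.final := ⟨m, hm⟩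
  unfold PTG.playCost
  rw [dif_pos hx]
  have h1 : Nat.find hx ≤ m := Nat.find_min' hx hm
  have h2 := histOf_stall (σ := minStrat G c s k0) (τ := τ) (s₀ := s) (Nat.find_spec hx) m h1
  rw [h2] at hc
  exact_mod_cast hc.le

lemma nw_max {c : ℝ} {h : Hist G.Loc} (hnw : ¬ Nonempty (Cert G c h))
    (ho : G.owner h.last.1 = Owner.max) :
    ∃ td, G.Legal h td ∧ ¬ Nonempty (Cert G c (G.extendH h td)) := by
  by_contra hcon
  push_neg at hcon
  exact hnw ⟨Cert.mx h ho fun td hl => Classical.choice (hcon td hl)⟩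

/-- The safety strategy of Max: keep the certificate set empty. -/
def maxStrat (G : PTG) (c : ℝ) : StratFun G.Loc := fun h =>
  if hv : ∃ td, G.Legal h td ∧ ¬ Nonempty (Cert G c (G.extendH h td)) then hv.choose
  else G.pickLegal h

lemma maxStrat_valid (hwf : G.WF) (c : ℝ) : G.MaxValid (maxStrat G c) := by
  intro h hv ho
  have hne : G.owner h.last.1 ≠ Owner.final := by rw [ho]; simp
  unfold maxStrat
  split
  · next hex => exact move_of_legal hex.choose_spec.1 hv
  · exact move_of_legal (pickLegal_legal hwf h hne) hv

lemma max_invariant (c : ℝ) (s : G.Config) (hn : ¬ Nonempty (Cert G c ⟨s, []⟩))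
    (σ : StratFun G.Loc) (hσ : G.MinValid σ) :
    ∀ n, ¬ Nonempty (Cert G c (G.histOf σ (maxStrat G c) s n)) := by
  intro n
  induction n with
  | zero => exact hn
  | succ n ih =>
    cases hO : G.owner ((G.histOf σ (maxStrat G c) s n).last.1) with
    | min =>
      rw [histOf_succ_min hO]
      have hl : G.Legal (G.histOf σ (maxStrat G c) s n) (σ (G.histOf σ (maxStrat G c) s n)) := by
        intro hv
        obtain ⟨s', cc, hm⟩ := hσ _ hv hO
        have h2 : s' = G.nextCfg (G.histOf σ (maxStrat G c) s n).last
            ((σ (G.histOf σ (maxStrat G c) s n)).1, (σ (G.histOf σ (maxStrat G c) s n)).2) :=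
          move_nextCfg hm
        rw [h2] at hm
        exact ⟨cc, hm⟩
      rintro ⟨k⟩
      exact ih ⟨Cert.mn _ _ hO hl k⟩
    | max =>
      rw [histOf_succ_max hO]
      have hv : ∃ td, G.Legal (G.histOf σ (maxStrat G c) s n) td ∧
          ¬ Nonempty (Cert G c (G.extendH (G.histOf σ (maxStrat G c) s n) td)) :=
        nw_max ih hO
      have hts : maxStrat G c (G.histOf σ (maxStrat G c) s n) = hv.choose := dif_pos hv
      rw [hts]
      exact hv.choose_spec.2
    | final =>
      rw [histOf_succ_final hO]
      exact ih

lemma max_bound (c : ℝ) (s : G.Config) (hn : ¬ Nonempty (Cert G c ⟨s, []⟩))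
    (σ : StratFun G.Loc) (hσ : G.MinValid σ) :
    (c : EReal) ≤ G.playCost σ (maxStrat G c) s := by
  unfold PTG.playCost
  split
  · next hx =>
    have hnw := max_invariant c s hn σ hσ (Nat.find hx)
    have hf := Nat.find_spec hx
    have hge : ¬ (G.accCost (G.histOf σ (maxStrat G c) s (Nat.find hx)) +
        G.fcost ((G.histOf σ (maxStrat G c) s (Nat.find hx)).last.1)
          ((G.histOf σ (maxStrat G c) s (Nat.find hx)).last.2) < c) :=
      fun hlt => hnw ⟨Cert.fin _ hf hlt⟩
    exact_mod_cast not_lt.1 hge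
  · exact le_top

end Determinacy
end PTGPaper

namespace PTGPaper

/-- Theorem 1(i): one-clock priced timed games are determined: for every
well-formed one-clock PTG `G` and every configuration `s`, the lower value and the upper
value coincide, so the value `Val = LVal = UVal` exists. -/
theorem ptg_determined (G : PTG) (hwf : G.WF) (s : G.Config) (hs : 0 ≤ s.2) :
    G.lval s = G.uval s := by
  classical
  refine le_antisymm ?_ ?_
  · exact iSup_iInf_le_iInf_iSup
      (fun (τ : {τ : StratFun G.Loc // G.MaxValid τ}) (σ : {σ : StratFun G.Loc // G.MinValid σ}) =>
        G.playCost σ.1 τ.1 s)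
  · by_contra hlt
    obtain ⟨z, hz1, hz2⟩ := exists_between (not_le.1 hlt)
    induction z using EReal.rec with
    | bot => exact absurd hz1 (not_lt_bot)
    | top => exact absurd hz2 (not_top_lt)
    | coe c =>
      by_cases hc : Nonempty (Cert G c ⟨s, []⟩)
      · obtain ⟨k0⟩ := hc
        have hub : G.uval s ≤ (c : EReal) := by
          refine le_trans (iInf_le _ ⟨minStrat G c s k0, minStrat_valid hwf c s k0⟩) ?_
          exact iSup_le fun τ => min_bound c s k0 τ.1 τ.2
        exact absurd hub (not_le.2 hz2)
      · have hlb : (c : EReal) ≤ G.lval s := by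
          refine le_trans ?_ (le_iSup _ ⟨maxStrat G c, maxStrat_valid hwf c⟩)
          exact le_iInf fun σ => max_bound c s hc σ.1 σ.2
        exact absurd hlb (not_le.2 hz1)


end PTGPaper
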